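/- With c₁(L) = n(1/2 + λ)σ + (1/2 − λ)π*η + (1/2 + nλ)π*c₁ required to be an integral class: if n is odd then λ must be strictly half-integral (λ ∈ (1/2)ℤ \ ℤ); if n is even and λ ∈ ℤ then η ≡ c₁ (mod 2); if n is even and λ is strictly half-integral then c₁ must be even. -/
import Mathlib


/-- Integrality analysis for the spectral line bundle
c₁(L) = n(1/2 + λ)σ + (1/2 − λ)π*η + (1/2 + nλ)π*c₁, where σ, π*η, π*c₁ are
independent integral classes (η, c₁ given by their integer coordinate vectors)
and λ = j/2 is half-integral.  If the class is integral, i.e. n(1/2 + λ) ∈ ℤ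
and each coordinate (1/2 − λ)η_i + (1/2 + nλ)(c₁)_i ∈ ℤ, then:
(a) n odd ⟹ λ is strictly half-integral (j odd);
(b) n even and λ ∈ ℤ ⟹ η ≡ c₁ (mod 2);
(c) n even and λ strictly half-integral ⟹ c₁ is even. -/
theorem spectral_line_bundle_integrality
    (n j : ℤ) (lam : ℚ) (hlam : lam = (j : ℚ) / 2)
    {d : ℕ} (η c₁ : Fin d → ℤ)
    (hσ : ∃ z : ℤ, (n : ℚ) * (1 / 2 + lam) = z)
    (hcoef : ∀ i, ∃ z : ℤ,
      (1 / 2 - lam) * (η i : ℚ) + (1 / 2 + (n : ℚ) * lam) * (c₁ i : ℚ) = z) :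
    (Odd n → Odd j) ∧
    (Even n → (∃ z : ℤ, lam = (z : ℚ)) → ∀ i, η i % 2 = c₁ i % 2) ∧
    (Even n → Odd j → ∀ i, Even (c₁ i)) := by
  subst hlam
  obtain ⟨z, hz⟩ := hσ
  have h1 : n * (1 + j) = 2 * z := by
    have : ((n * (1 + j) : ℤ) : ℚ) = ((2 * z : ℤ) : ℚ) := by
      push_cast; linarith [hz]
    exact_mod_cast this
  have hco : ∀ i, ∃ w : ℤ, (1 - j) * η i + (1 + n * j) * c₁ i = 2 * w := by
    intro i
    obtain ⟨w, hw⟩ := hcoef i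
    refine ⟨w, ?_⟩
    have : (((1 - j) * η i + (1 + n * j) * c₁ i : ℤ) : ℚ) = ((2 * w : ℤ) : ℚ) := by
      push_cast; linarith [hw]
    exact_mod_cast this
  refine ⟨?_, ?_, ?_⟩
  · rintro ⟨k, hk⟩
    subst hk
    exact ⟨z - k * (1 + j) - 1, by linear_combination h1⟩
  · rintro ⟨m, hm⟩ ⟨k, hk⟩ i
    subst hm
    have hj : j = 2 * k := by
      have : (j : ℚ) = 2 * k := by linarith [hk]
      exact_mod_cast this
    subst hj
    obtain ⟨w, hw⟩ := hco i
    have key : η i + c₁ i = 2 * (w + k * η i - (m + m) * k * c₁ i) := by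
      linear_combination hw
    omega
  · rintro ⟨m, hm⟩ ⟨k, hk⟩ i
    subst hm
    subst hk
    obtain ⟨w, hw⟩ := hco i
    exact ⟨w + k * η i - m * (2 * k + 1) * c₁ i, by linear_combination hw⟩
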